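/- arXiv:2509.25688 — 2 statements merged into one kernel-verified Lean document; each statement's English description precedes it below -/
import Mathlib

section
/- Fix μ_h ∈ ℝ and σ_h > 0, σ_c > 0. For t ∈ ℝ, let X_t and Y be independent real-valued random variables with X_t ~ N(μ_h + t, σ_c²) and Y ~ N(μ_h, σ_h²). Then P((X_t − μ_h)² ≥ (Y − μ_h)²) → 1 as |t| → ∞; that is, for every ε > 0 there exists M > 0 such that for all t with |t| ≥ M, P((X_t − μ_h)² ≥ (Y − μ_h)²) > 1 − ε. -/
/-!
A single random variable is bounded in probability (finite measures on `ℝ` are tight), so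
`|Y - μh| ≤ c` with probability close to one for large `c`. On the other hand `X t - μh` is a
fixed centred Gaussian shifted by `t`, so the probability that it lands in the ball of radius `c`
vanishes as `|t| → ∞`. Outside these two small events, `(Y - μh)² ≤ c² ≤ (X t - μh)²`.
-/

open MeasureTheory ProbabilityTheory Filter Metric Topology
open scoped ENNReal

lemma tendsto_measure_compl_closedBall {E : Type*} [MeasurableSpace E] [PseudoMetricSpace E]
    [CompleteSpace E] [SecondCountableTopology E] [BorelSpace E]
    (μ : Measure E) [IsFiniteMeasure μ] (x : E) :
    Tendsto (fun r : ℝ ↦ μ (closedBall x r)ᶜ) atTop (𝓝 0) := by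
  simpa using tendsto_measure_compl_closedBall_of_isTightMeasureSet
    (isTightMeasureSet_singleton (μ := μ)) x

lemma tendsto_map_add_const_ball (μ : Measure ℝ) [IsFiniteMeasure μ] (a c : ℝ) :
    Tendsto (fun t ↦ μ.map (· + t) (ball a c)) (comap abs atTop) (𝓝 0) := by
  have hr : Tendsto (fun t : ℝ ↦ |t| - |a| - c) (comap abs atTop) atTop :=
    tendsto_atTop_add_const_right _ _ (tendsto_atTop_add_const_right _ _ tendsto_comap)
  refine tendsto_of_tendsto_of_tendsto_of_le_of_le tendsto_const_nhds
    ((tendsto_measure_compl_closedBall μ 0).comp hr) (fun _ ↦ bot_le) fun t ↦ ?_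
  rw [Measure.map_apply (measurable_add_const t) measurableSet_ball]
  refine measure_mono fun z hz ↦ ?_
  simp only [Set.mem_preimage, mem_ball, Real.dist_eq] at hz
  simp only [Set.mem_compl_iff, mem_closedBall, Real.dist_eq, sub_zero, not_le]
  have ht := abs_sub (z + t - a) (z - a)
  rw [show z + t - a - (z - a) = t by ring] at ht
  linarith [abs_sub z a]

lemma tendsto_measure_sq_lt_sq {Ω ι : Type*} [MeasurableSpace Ω] (μ : Measure Ω)
    {l : Filter ι} (U : ι → Ω → ℝ) (V : Ω → ℝ)
    (hU : ∀ c, Tendsto (fun i ↦ μ {ω | |U i ω| < c}) l (𝓝 0))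
    (hV : Tendsto (fun c ↦ μ {ω | c < |V ω|}) atTop (𝓝 0)) :
    Tendsto (fun i ↦ μ {ω | U i ω ^ 2 < V ω ^ 2}) l (𝓝 0) := by
  refine ENNReal.tendsto_nhds_zero.2 fun ε hε ↦ ?_
  have hε2 : 0 < ε / 2 := ENNReal.half_pos hε.ne'
  obtain ⟨c, hc⟩ := (ENNReal.tendsto_nhds_zero.1 hV _ hε2).exists
  filter_upwards [ENNReal.tendsto_nhds_zero.1 (hU c) _ hε2] with i hi
  have hsub : {ω | U i ω ^ 2 < V ω ^ 2} ⊆ {ω | |U i ω| < c} ∪ {ω | c < |V ω|} := by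
    intro ω hω
    rw [Set.mem_ofPred_eq, sq_lt_sq] at hω
    rcases lt_or_ge (|U i ω|) c with h | h
    · exact Or.inl h
    · exact Or.inr (h.trans_lt hω)
  calc μ {ω | U i ω ^ 2 < V ω ^ 2} ≤ μ {ω | |U i ω| < c} + μ {ω | c < |V ω|} :=
        (measure_mono hsub).trans (measure_union_le _ _)
    _ ≤ ε / 2 + ε / 2 := add_le_add hi hc
    _ = ε := ENNReal.add_halves ε

lemma tendsto_measure_one_of_tendsto_measure_compl {Ω ι : Type*} [MeasurableSpace Ω]
    (μ : Measure Ω) [IsProbabilityMeasure μ] {l : Filter ι} {s : ι → Set Ω}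
    (h : Tendsto (fun i ↦ μ (s i)ᶜ) l (𝓝 0)) : Tendsto (fun i ↦ μ (s i)) l (𝓝 1) := by
  have hlow : Tendsto (fun i ↦ 1 - μ (s i)ᶜ) l (𝓝 1) := by
    simpa using ENNReal.Tendsto.sub tendsto_const_nhds h (Or.inl ENNReal.one_ne_top)
  refine tendsto_of_tendsto_of_tendsto_of_le_of_le hlow tendsto_const_nhds (fun i ↦ ?_)
    fun _ ↦ prob_le_one
  rw [tsub_le_iff_right, ← measure_univ (μ := μ)]
  exact measure_univ_le_add_compl _

theorem stmt_3_general
    {Ω : Type*} [MeasurableSpace Ω] (P : Measure Ω) [IsProbabilityMeasure P]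
    (μh σc : ℝ)
    (X : ℝ → Ω → ℝ) (Y : Ω → ℝ)
    (hX : ∀ t, Measurable (X t)) (hY : Measurable Y)
    (hXd : ∀ t, P.map (X t) = gaussianReal (μh + t) (Real.toNNReal (σc ^ 2))) :
    ∀ ε : ℝ≥0∞, 0 < ε → ∃ M : ℝ, 0 < M ∧ ∀ t : ℝ, M ≤ |t| →
      1 - ε < P {ω | (Y ω - μh) ^ 2 ≤ (X t ω - μh) ^ 2} := by
  intro ε hε
  have hXball (c : ℝ) :
      Tendsto (fun t ↦ P {ω | |X t ω - μh| < c}) (comap abs atTop) (𝓝 0) := by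
    convert tendsto_map_add_const_ball (gaussianReal μh (σc ^ 2).toNNReal) μh c using 2 with t
    rw [gaussianReal_map_add_const, ← hXd, Measure.map_apply (hX t) measurableSet_ball]
    simp [ball, Real.dist_eq]
  have hYball : Tendsto (fun c ↦ P {ω | c < |Y ω - μh|}) atTop (𝓝 0) := by
    convert tendsto_measure_compl_closedBall (P.map Y) μh using 2 with c
    rw [Measure.map_apply hY measurableSet_closedBall.compl]
    congr 1
    ext ω
    simp [Real.dist_eq]
  have hbad := tendsto_measure_sq_lt_sq P (fun t ω ↦ X t ω - μh) (Y · - μh) hXball hYball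
  have hlim : Tendsto (fun t ↦ P {ω | (Y ω - μh) ^ 2 ≤ (X t ω - μh) ^ 2}) (comap abs atTop)
      (𝓝 1) :=
    tendsto_measure_one_of_tendsto_measure_compl P <| by
      simpa only [Set.compl_ofPred, not_le] using hbad
  obtain ⟨M, hM, hMt⟩ := ((atTop_basis' (1 : ℝ)).comap abs).mem_iff.1
    (hlim.eventually (lt_mem_nhds (ENNReal.sub_lt_self ENNReal.one_ne_top one_ne_zero hε.ne')))
  exact ⟨M, one_pos.trans_le hM, fun t ht ↦ hMt ht⟩

/-- Theorem 1 (mean-incongruence case): with `X t ~ N(μh + t, σc²)` and `Y ~ N(μh, σh²)`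
independent for each `t`, `P((X t − μh)² ≥ (Y − μh)²) → 1` as `|t| → ∞`. -/
theorem stmt_3
    {Ω : Type*} [MeasurableSpace Ω] (P : Measure Ω) [IsProbabilityMeasure P]
    (μh σh σc : ℝ) (hσh : 0 < σh) (hσc : 0 < σc)
    (X : ℝ → Ω → ℝ) (Y : Ω → ℝ)
    (hX : ∀ t, Measurable (X t)) (hY : Measurable Y)
    (hind : ∀ t, IndepFun (X t) Y P)
    (hXd : ∀ t, P.map (X t) = gaussianReal (μh + t) (Real.toNNReal (σc ^ 2)))
    (hYd : P.map Y = gaussianReal μh (Real.toNNReal (σh ^ 2))) :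
    ∀ ε : ℝ≥0∞, 0 < ε → ∃ M : ℝ, 0 < M ∧ ∀ t : ℝ, M ≤ |t| →
      1 - ε < P {ω | (Y ω - μh) ^ 2 ≤ (X t ω - μh) ^ 2} :=
  stmt_3_general P μh σc X Y hX hY hXd
end

section
/- Let α_C, α_IC ∈ (0, 1) with α_IC < α_C, and fix g₂ = 1/4. For g₁ ∈ (0, 1/4), define b(g₁) = log( ((1 − α_C)·α_IC) / ((1 − α_IC)·α_C) ) / (log g₁ − log(1/4)) and a(g₁) = log((1 − α_C)/α_C) − b(g₁)·log g₁. Then a(g₁) + b(g₁)·log(1/2) → log((1 − α_IC)/α_IC) as g₁ → 0⁺, and consequently 1/(1 + exp(a(g₁) + b(g₁)·log(1/2))) → α_IC as g₁ → 0⁺. -/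
open Filter Real Set Topology

/-!
Since `a = log ((1 - α_C) / α_C) - b log g₁`, we have `a + b log s = log ((1 - α_C) / α_C)
+ b (log s - log g₁)`. As `g₁ → 0⁺`, `log g₁ → -∞`, so `b (log s - log g₁) → -L` for every
fixed `s`, where `L` is the numerator of `b`; and `log ((1 - α_C) / α_C) - L` is exactly
`log ((1 - α_IC) / α_IC)`. The sigmoid is continuous and inverts this log-odds, giving `α_IC`.
-/

theorem tendsto_div_log_sub_mul_sub_log (L u v : ℝ) :
    Tendsto (fun g => L / (log g - v) * (u - log g)) (𝓝[>] 0) (𝓝 (-L)) := by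
  have hden : Tendsto (fun g => log g - v) (𝓝[>] 0) atBot :=
    tendsto_atBot_add_const_right _ (-v) tendsto_log_nhdsGT_zero
  have hvanish : Tendsto (fun g => L * (u - v) / (log g - v)) (𝓝[>] 0) (𝓝 0) :=
    tendsto_const_nhds.div_atBot hden
  have hrepr : (fun g => L * (u - v) / (log g - v) - L)
      =ᶠ[𝓝[>] 0] fun g => L / (log g - v) * (u - log g) := by
    filter_upwards [hden.eventually_lt_atBot 0] with g hg
    field_simp [hg.ne]
    ring
  simpa using (hvanish.sub_const L).congr' hrepr

theorem log_div_sub_log_div_div {x y : ℝ} (hx : x ≠ 0) (hy : y ≠ 0) :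
    log x - log (x / y) = log y := by
  rw [log_div hx hy]
  ring

theorem one_div_one_add_exp_log_one_sub_div {q : ℝ} (hq : q ∈ Ioo (0 : ℝ) 1) :
    1 / (1 + exp (log ((1 - q) / q))) = q := by
  obtain ⟨hq0, hq1⟩ := hq
  rw [exp_log (div_pos (sub_pos.mpr hq1) hq0)]
  field_simp
  ring

theorem stmt_15_general
    (αC αIC : ℝ) (hαC : αC ∈ Set.Ioo (0 : ℝ) 1) (hαIC : αIC ∈ Set.Ioo (0 : ℝ) 1)
    (a b : ℝ → ℝ)
    (hb : ∀ g₁ ∈ Set.Ioo (0 : ℝ) (1 / 4),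
        b g₁ = Real.log (((1 - αC) * αIC) / ((1 - αIC) * αC))
              / (Real.log g₁ - Real.log (1 / 4)))
    (ha : ∀ g₁ ∈ Set.Ioo (0 : ℝ) (1 / 4),
        a g₁ = Real.log ((1 - αC) / αC) - b g₁ * Real.log g₁) :
    Filter.Tendsto (fun g₁ => a g₁ + b g₁ * Real.log (1 / 2))
        (nhdsWithin 0 (Set.Ioo (0 : ℝ) (1 / 4)))
        (nhds (Real.log ((1 - αIC) / αIC)))
      ∧ Filter.Tendsto (fun g₁ => 1 / (1 + Real.exp (a g₁ + b g₁ * Real.log (1 / 2))))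
        (nhdsWithin 0 (Set.Ioo (0 : ℝ) (1 / 4)))
        (nhds αIC) := by
  have hodds {q : ℝ} (hq : q ∈ Ioo (0 : ℝ) 1) : (1 - q) / q ≠ 0 :=
    (div_pos (sub_pos.mpr hq.2) hq.1).ne'
  have hlimit : log ((1 - αC) / αC) + -log (((1 - αC) * αIC) / ((1 - αIC) * αC))
      = log ((1 - αIC) / αIC) := by
    rw [← log_div_sub_log_div_div (hodds hαC) (hodds hαIC)]
    congr 3
    field_simp
  have hcalibrated : (fun g₁ => log ((1 - αC) / αC)
        + log (((1 - αC) * αIC) / ((1 - αIC) * αC)) / (log g₁ - log (1 / 4))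
          * (log (1 / 2) - log g₁))
      =ᶠ[𝓝[Ioo 0 (1 / 4)] 0] fun g₁ => a g₁ + b g₁ * log (1 / 2) := by
    filter_upwards [self_mem_nhdsWithin] with g₁ hg₁
    rw [ha g₁ hg₁, hb g₁ hg₁]
    ring
  have hlogit : Tendsto (fun g₁ => a g₁ + b g₁ * log (1 / 2))
      (𝓝[Ioo 0 (1 / 4)] 0) (𝓝 (log ((1 - αIC) / αIC))) := by
    rw [← hlimit]
    refine Tendsto.congr' hcalibrated (Tendsto.const_add _ ?_)
    exact (tendsto_div_log_sub_mul_sub_log _ _ _).mono_left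
      (nhdsWithin_mono _ Ioo_subset_Ioi_self)
  have hsigmoid : Continuous fun t : ℝ => 1 / (1 + exp t) :=
    continuous_const.div (continuous_const.add continuous_exp) fun t => by positivity
  refine ⟨hlogit, ?_⟩
  simpa only [Function.comp_def, one_div_one_add_exp_log_one_sub_div hαIC] using
    (hsigmoid.tendsto _).comp hlogit

/-- Borrowing Consistency (incongruent part of the proof of Theorem 2): with `g₂ = 1/4`
fixed and `a(g₁), b(g₁)` the calibrated sigmoid parameters for `g₁ ∈ (0, 1/4)`, as
`g₁ → 0⁺` we have `a(g₁) + b(g₁)·log(1/2) → log((1 − α_IC)/α_IC)`, and consequently the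
sigmoid evaluated at `s = 1/2` converges to `α_IC`. -/
theorem stmt_15
    (αC αIC : ℝ) (hαC : αC ∈ Set.Ioo (0 : ℝ) 1) (hαIC : αIC ∈ Set.Ioo (0 : ℝ) 1)
    (hlt : αIC < αC) (a b : ℝ → ℝ)
    (hb : ∀ g₁ ∈ Set.Ioo (0 : ℝ) (1 / 4),
        b g₁ = Real.log (((1 - αC) * αIC) / ((1 - αIC) * αC))
              / (Real.log g₁ - Real.log (1 / 4)))
    (ha : ∀ g₁ ∈ Set.Ioo (0 : ℝ) (1 / 4),
        a g₁ = Real.log ((1 - αC) / αC) - b g₁ * Real.log g₁) :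
    Filter.Tendsto (fun g₁ => a g₁ + b g₁ * Real.log (1 / 2))
        (nhdsWithin 0 (Set.Ioo (0 : ℝ) (1 / 4)))
        (nhds (Real.log ((1 - αIC) / αIC)))
      ∧ Filter.Tendsto (fun g₁ => 1 / (1 + Real.exp (a g₁ + b g₁ * Real.log (1 / 2))))
        (nhdsWithin 0 (Set.Ioo (0 : ℝ) (1 / 4)))
        (nhds αIC) :=
  stmt_15_general αC αIC hαC hαIC a b hb ha
end
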